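/- Let ℓ ∈ ℕ and define f_ℓ : ℝ³ → ℂ by f_ℓ(n) = ((n₁ − i n₂)/2)^ℓ, and let L₊ = (n₁ + i n₂) ∂/∂n₃ − n₃(∂/∂n₁ + i ∂/∂n₂). Then for every unit vector n ∈ S² and every ζ ∈ ℂ with ζ ≠ 0, (−n(ζ)/ζ²)^ℓ = Σ_{k=0}^{2ℓ} (1/(k! ζ^k)) (L₊^k f_ℓ)(n), and moreover L₊^k f_ℓ vanishes identically on S² for k > 2ℓ. -/

import Mathlib

/-- `n(ζ) = (1/2)(n₁ + i n₂) + ζ n₃ − (1/2)(n₁ − i n₂) ζ²` as a function of `n ∈ ℝ³`. -/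
noncomputable def xz (ζ : ℂ) (n : Fin 3 → ℝ) : ℂ :=
  (1 / 2 : ℂ) * ((n 0 : ℂ) + Complex.I * (n 1 : ℂ)) + ζ * (n 2 : ℂ)
    - (1 / 2 : ℂ) * ((n 0 : ℂ) - Complex.I * (n 1 : ℂ)) * ζ ^ 2

/-- Partial derivative `∂f/∂n_j` of a complex-valued function on `ℝ³`. -/
noncomputable def pd (j : Fin 3) (f : (Fin 3 → ℝ) → ℂ) (x : Fin 3 → ℝ) : ℂ :=
  fderiv ℝ f x (Pi.single j 1)

/-- `L₊ = (n₁ + i n₂) ∂/∂n₃ − n₃(∂/∂n₁ + i ∂/∂n₂)` as an operator on functions. -/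
noncomputable def Lp (f : (Fin 3 → ℝ) → ℂ) : (Fin 3 → ℝ) → ℂ := fun x =>
  ((x 0 : ℂ) + Complex.I * (x 1 : ℂ)) * pd 2 f x
    - (x 2 : ℂ) * (pd 0 f x + Complex.I * pd 1 f x)

/-- `f_ℓ(n) = ((n₁ − i n₂)/2)^ℓ`. -/
noncomputable def fl (ℓ : ℕ) : (Fin 3 → ℝ) → ℂ := fun n =>
  ((((n 0 : ℂ) - Complex.I * (n 1 : ℂ))) / 2) ^ ℓ

/-!
With `w = (n₁ - i n₂)/2`, `z = n₃`, `u = (n₁ + i n₂)/2`, the operator `L₊` is a derivation on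
polynomials with `L₊ w = -z`, `L₊ z = 2u`, `L₊ u = 0`. Hence on `g(t) = w - t z - t² u` applying
`L₊` to the coefficients is the same as `d/dt`, and since both are derivations this persists to
`g(t)^ℓ`. Comparing coefficients gives `L₊^k w^ℓ = k! [t^k] g(t)^ℓ`, so `∑ₖ tᵏ/k! L₊^k f_ℓ` is the
Taylor expansion of the polynomial `g(t)^ℓ` of degree `2ℓ`; finally `g(1/ζ) = -n(ζ)/ζ²`.
-/

section Taylor

open Polynomial

variable {R A : Type*} [CommRing R] [CommRing A] [Algebra R A] (D : Derivation R A A)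

theorem Derivation.coeff_pow_of_coeff_eq_coeff_derivative {g : A[X]}
    (hg : ∀ k, D (g.coeff k) = (derivative g).coeff k) (ℓ k : ℕ) :
    D ((g ^ ℓ).coeff k) = (derivative (g ^ ℓ)).coeff k := by
  let _ : Differential A := ⟨D.restrictScalars ℤ⟩
  have hg' : Differential.mapCoeffs g = derivative g := Polynomial.ext hg
  have : Differential.mapCoeffs (g ^ ℓ) = derivative (g ^ ℓ) := by
    rw [Derivation.leibniz_pow, hg', derivative_pow, smul_eq_mul, nsmul_eq_mul, C_eq_natCast,
      mul_assoc]
  exact congrArg (coeff · k) this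

theorem Derivation.iterate_coeff_zero_eq_factorial_mul_coeff {p : A[X]}
    (hp : ∀ k, D (p.coeff k) = (derivative p).coeff k) (k : ℕ) :
    D^[k] (p.coeff 0) = k.factorial * p.coeff k := by
  induction k with
  | zero => simp
  | succ k ih =>
    rw [Function.iterate_succ_apply', ih, Derivation.leibniz, Derivation.map_natCast, hp,
      coeff_derivative, Nat.factorial_succ]
    simp only [smul_eq_mul]
    push_cast
    ring

end Taylor

section PolynomialFunctions

open MvPolynomial

variable {σ : Type*}

noncomputable def polyFun (p : MvPolynomial σ ℂ) (x : σ → ℝ) : ℂ :=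
  eval (fun i => (x i : ℂ)) p

theorem hasFDerivAt_polyFun [Fintype σ] [DecidableEq σ] (p : MvPolynomial σ ℂ)
    (x : σ → ℝ) :
    HasFDerivAt (polyFun p)
      (∑ i, (ContinuousLinearMap.proj i : (σ → ℝ) →L[ℝ] ℝ).smulRight (polyFun (pderiv i p) x))
      x := by
  induction p using MvPolynomial.induction_on with
  | C a =>
    rw [show polyFun (C a) = fun _ => a from funext fun _ => eval_C a]
    refine (hasFDerivAt_const a x).congr_fderiv ?_
    ext v; simp [polyFun]
  | add p q hp hq =>
    have hfun : polyFun (p + q) = polyFun p + polyFun q := by ext; simp [polyFun]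
    rw [hfun]
    refine (hp.add hq).congr_fderiv ?_
    ext v; simp [polyFun, Finset.sum_add_distrib]
  | mul_X p i hp =>
    have hfun : polyFun (p * X i) = fun y => polyFun p y * (y i : ℂ) := by ext; simp [polyFun]
    rw [hfun]
    refine (hp.mul (Complex.ofRealCLM.comp
      (ContinuousLinearMap.proj i : (σ → ℝ) →L[ℝ] ℝ)).hasFDerivAt).congr_fderiv ?_
    ext v
    simp [polyFun, Pi.single_apply, apply_ite, Finset.sum_add_distrib, Finset.mul_sum, mul_comm,
      mul_left_comm]

theorem pd_polyFun (j : Fin 3) (p : MvPolynomial (Fin 3) ℂ) :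
    pd j (polyFun p) = polyFun (pderiv j p) := by
  funext x
  simp [pd, (hasFDerivAt_polyFun p x).fderiv, Pi.single_apply]

end PolynomialFunctions

section LPlus

open MvPolynomial Complex

noncomputable def Lplus : Derivation ℂ (MvPolynomial (Fin 3) ℂ) (MvPolynomial (Fin 3) ℂ) :=
  (X 0 + C I * X 1 : MvPolynomial (Fin 3) ℂ) • pderiv 2
    - (X 2 : MvPolynomial (Fin 3) ℂ) • (pderiv 0 + I • pderiv 1)

theorem polyFun_Lplus (p : MvPolynomial (Fin 3) ℂ) : polyFun (Lplus p) = Lp (polyFun p) := by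
  funext x
  simp only [Lp, pd_polyFun, polyFun, Lplus, Derivation.coe_sub, Derivation.coe_smul,
    Derivation.coe_add, Pi.sub_apply, Pi.smul_apply, Pi.add_apply, smul_eq_mul, smul_add, map_sub,
    map_mul, map_add, eval_X, eval_C, smul_eval]
  ring

noncomputable def wPoly : MvPolynomial (Fin 3) ℂ := C 2⁻¹ * (X 0 - C I * X 1)

noncomputable def uPoly : MvPolynomial (Fin 3) ℂ := C 2⁻¹ * (X 0 + C I * X 1)

theorem C_I_mul_C_I {σ : Type*} : (C I * C I : MvPolynomial σ ℂ) = -1 := by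
  rw [← C_mul, I_mul_I, C_neg, C_1]

theorem two_mul_C_inv_two {σ : Type*} : (2 * C 2⁻¹ : MvPolynomial σ ℂ) = 1 := by
  rw [← map_ofNat C 2, ← C_mul]; norm_num

theorem Lplus_X_zero : Lplus (X 0) = -X 2 := by simp [Lplus]

theorem Lplus_X_one : Lplus (X 1) = -(C I * X 2) := by simp [Lplus, smul_eq_C_mul, mul_comm]

theorem Lplus_X_two : Lplus (X 2) = 2 * uPoly := by
  simp [Lplus, uPoly, ← mul_assoc, two_mul_C_inv_two]

theorem Lplus_wPoly : Lplus wPoly = -X 2 := by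
  simp only [wPoly, Derivation.leibniz, derivation_C, map_sub, Lplus_X_zero, Lplus_X_one,
    smul_eq_mul, mul_zero, add_zero]
  linear_combination (C 2⁻¹ * X 2) * C_I_mul_C_I - X 2 * two_mul_C_inv_two

theorem Lplus_uPoly : Lplus uPoly = 0 := by
  simp only [uPoly, Derivation.leibniz, derivation_C, map_add, Lplus_X_zero, Lplus_X_one,
    smul_eq_mul, mul_zero, add_zero]
  linear_combination (-C 2⁻¹ * X 2) * C_I_mul_C_I

end LPlus

section Flow

open Polynomial

-- `exp (t L₊) w`, i.e. `w - t z - t² u`.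
noncomputable def flowPoly : (MvPolynomial (Fin 3) ℂ)[X] :=
  C wPoly - X * C (MvPolynomial.X 2) - X ^ 2 * C uPoly

theorem Lplus_coeff_flowPoly (k : ℕ) :
    Lplus (flowPoly.coeff k) = (derivative flowPoly).coeff k := by
  rcases k with _ | _ | _ | k <;>
    simp [flowPoly, coeff_X, coeff_C, coeff_X_pow, Lplus_wPoly, Lplus_X_two,
      Lplus_uPoly, one_add_one_eq_two, mul_comm uPoly]

theorem natDegree_flowPoly_pow_lt (ℓ : ℕ) : (flowPoly ^ ℓ).natDegree < 2 * ℓ + 1 := by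
  have h : flowPoly.natDegree ≤ 2 := by
    unfold flowPoly
    compute_degree!
  calc (flowPoly ^ ℓ).natDegree ≤ ℓ * flowPoly.natDegree := natDegree_pow_le
    _ < 2 * ℓ + 1 := by nlinarith

theorem iterate_Lp_fl (ℓ k : ℕ) :
    Lp^[k] (fl ℓ) = polyFun ((k.factorial : MvPolynomial (Fin 3) ℂ) * (flowPoly ^ ℓ).coeff k) := by
  have hfl : fl ℓ = polyFun (wPoly ^ ℓ) := by
    funext x
    simp only [fl, polyFun, wPoly, map_pow, map_mul, map_sub, MvPolynomial.eval_C,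
      MvPolynomial.eval_X]
    ring
  have hcoeff : (flowPoly ^ ℓ).coeff 0 = wPoly ^ ℓ := by
    simp [coeff_zero_eq_eval_zero, flowPoly]
  rw [hfl, ← (Function.Semiconj.iterate_right polyFun_Lplus k) (wPoly ^ ℓ), ← hcoeff,
    Lplus.iterate_coeff_zero_eq_factorial_mul_coeff
      (Lplus.coeff_pow_of_coeff_eq_coeff_derivative Lplus_coeff_flowPoly ℓ)]

theorem eval₂_flowPoly (n : Fin 3 → ℝ) {ζ : ℂ} (hζ : ζ ≠ 0) :
    flowPoly.eval₂ (MvPolynomial.eval fun i => (n i : ℂ)) ζ⁻¹ = -xz ζ n / ζ ^ 2 := by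
  simp only [flowPoly, xz, wPoly, uPoly, eval₂_add, eval₂_sub, eval₂_mul, eval₂_C, eval₂_X, eval₂_X_pow,
    map_mul, map_sub, map_add, MvPolynomial.eval_C, MvPolynomial.eval_X]
  field_simp
  ring

end Flow

theorem exp_Lp_expansion_of_n_zeta_pow_general (ℓ : ℕ) (n : Fin 3 → ℝ) :
    (∀ ζ : ℂ, ζ ≠ 0 →
      (-(xz ζ n) / ζ ^ 2) ^ ℓ =
        ∑ k ∈ Finset.range (2 * ℓ + 1),
          (1 / ((k.factorial : ℂ) * ζ ^ k)) * (Lp^[k] (fl ℓ)) n) ∧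
    (∀ k : ℕ, 2 * ℓ < k → (Lp^[k] (fl ℓ)) n = 0) := by
  refine ⟨fun ζ hζ => ?_, fun k hk => ?_⟩
  · rw [← eval₂_flowPoly n hζ, ← Polynomial.eval₂_pow,
      Polynomial.eval₂_eq_sum_range' _ (natDegree_flowPoly_pow_lt ℓ)]
    refine Finset.sum_congr rfl fun k _ => ?_
    have hfact : (k.factorial : ℂ) ≠ 0 := Nat.cast_ne_zero.mpr k.factorial_ne_zero
    rw [iterate_Lp_fl]
    simp only [polyFun, map_mul, map_natCast, inv_pow]
    field_simp
  · rw [iterate_Lp_fl, Polynomial.coeff_eq_zero_of_natDegree_lt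
      ((natDegree_flowPoly_pow_lt ℓ).trans_le hk), mul_zero]
    simp [polyFun]

/-- For every unit vector `n ∈ S²` and `ζ ≠ 0`,
`(−n(ζ)/ζ²)^ℓ = Σ_{k=0}^{2ℓ} (1/(k! ζ^k)) (L₊^k f_ℓ)(n)`, and `L₊^k f_ℓ` vanishes on `S²`
for `k > 2ℓ`. -/
theorem exp_Lp_expansion_of_n_zeta_pow (ℓ : ℕ) (n : Fin 3 → ℝ)
    (hn : n 0 ^ 2 + n 1 ^ 2 + n 2 ^ 2 = 1) :
    (∀ ζ : ℂ, ζ ≠ 0 →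
      (-(xz ζ n) / ζ ^ 2) ^ ℓ =
        ∑ k ∈ Finset.range (2 * ℓ + 1),
          (1 / ((k.factorial : ℂ) * ζ ^ k)) * (Lp^[k] (fl ℓ)) n) ∧
    (∀ k : ℕ, 2 * ℓ < k → (Lp^[k] (fl ℓ)) n = 0) :=
  exp_Lp_expansion_of_n_zeta_pow_general ℓ n
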